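/- arXiv:2605.20151 — 2 statements merged into one kernel-verified Lean document; each statement's English description precedes it below -/
import Mathlib

section
/- For every node μ ∈ M_l^c and all integers t ≥ s ≥ 0 with t − s ≥ K − 1, the total mass retained on learning models is bounded below: ∑_{ν∈M_l} J_{t,s+1,μ,ν} ≥ α^{K−1}. -/
open Matrix Finset Filter

noncomputable section

/-- In-neighbourhood of `μ` in the directed graph with edge set `E`. -/
def Nin {K : ℕ} (E : Finset (Fin K × Fin K)) (μ : Fin K) : Finset (Fin K) :=
  Finset.univ.filter (fun ν => (ν, μ) ∈ E)

/-- The set of learning models (those with at least one incoming edge). -/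
def Ml {K : ℕ} (E : Finset (Fin K × Fin K)) : Finset (Fin K) :=
  Finset.univ.filter (fun μ => Nin E μ ≠ ∅)

/-- The set of models with no incoming edge (stable data sources). -/
def Mu {K : ℕ} (E : Finset (Fin K × Fin K)) : Finset (Fin K) :=
  Finset.univ.filter (fun μ => Nin E μ = ∅)

/-- The edge relation: `EdgeRel E a b` iff `(a, b) ∈ E`. -/
def EdgeRel {K : ℕ} (E : Finset (Fin K × Fin K)) : Fin K → Fin K → Prop :=
  fun a b => (a, b) ∈ E

open Classical in
/-- Models in `M_l` not reachable by a directed path from any node of `M_u`. -/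
def MlInf {K : ℕ} (E : Finset (Fin K × Fin K)) : Finset (Fin K) :=
  (Ml E).filter (fun μ => ∀ ν ∈ Mu E, ¬ Relation.TransGen (EdgeRel E) ν μ)

open Classical in
/-- Models in `M_l^∞` together with models reachable from some node of `M_l^∞`. -/
def Mlc {K : ℕ} (E : Finset (Fin K × Fin K)) : Finset (Fin K) :=
  (Ml E).filter (fun μ => μ ∈ MlInf E ∨ ∃ ν ∈ MlInf E, Relation.TransGen (EdgeRel E) ν μ)

/-- The non-collapsing learning models. -/
def Mlnc {K : ℕ} (E : Finset (Fin K × Fin K)) : Finset (Fin K) := Ml E \ Mlc E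

/-- `Jmat P t s = P_t P_{t−1} ⋯ P_s` (equal to `I` when `s = t + 1`). -/
def Jmat {K : ℕ} (P : ℕ → Matrix (Fin K) (Fin K) ℝ) (t s : ℕ) : Matrix (Fin K) (Fin K) ℝ :=
  ((List.range' s (t + 1 - s)).reverse.map P).prod

/-- The `E`-paths `v_1 → ⋯ → v_x → μ` of length `x` ending at `μ`, encoded as a function
`v : Fin (x+1) → Fin K` with `v x = μ` and `(v i, v (i+1)) ∈ E` for all `i < x`. -/
def pathsTo {K : ℕ} (E : Finset (Fin K × Fin K)) (x : ℕ) (μ : Fin K) :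
    Finset (Fin (x + 1) → Fin K) :=
  Finset.univ.filter (fun v => v (Fin.last x) = μ ∧ ∀ i : Fin x, (v i.castSucc, v i.succ) ∈ E)

end

/-! The set `M_l^∞` is closed under taking in-neighbours, so a row of `P_t` indexed by a node of
`M_l^∞` carries all its mass into `M_l^∞`, and hence so does the corresponding row of every
product `J_{t,s+1}`. A node reachable from `M_l^∞` in `m` steps receives, along the last edge,
at least `α` times the mass of a node reachable in `m - 1` steps, hence at least `α ^ m`. By
pigeonhole every node reachable from `M_l^∞` is reachable in at most `K - 1` steps. -/

theorem Finset.iterate_subset_iterate_card_sub_one {ι : Type*} [Fintype ι]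
    {F : Finset ι → Finset ι} (hF : ∀ S, S ⊆ F S) {S : Finset ι} (hS : S.Nonempty) (n : ℕ) :
    F^[n] S ⊆ F^[Fintype.card ι - 1] S := by
  have mono : Monotone (F^[·] S) := monotone_nat_of_le_succ fun m => by
    simpa only [Function.iterate_succ_apply'] using hF _
  by_cases hfix : ∃ j < Fintype.card ι, F (F^[j] S) = F^[j] S
  · obtain ⟨j, hj, hfix⟩ := hfix
    have stable : ∀ n, j ≤ n → F^[n] S = F^[j] S := fun n hn => by
      obtain ⟨k, rfl⟩ := Nat.exists_eq_add_of_le hn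
      rw [add_comm, Function.iterate_add_apply, Function.iterate_fixed hfix]
    rcases le_total n (Fintype.card ι - 1) with h | h
    · exact mono h
    · rw [stable n (by omega), stable (Fintype.card ι - 1) (by omega)]
  · push Not at hfix
    have grow : ∀ m ≤ Fintype.card ι, m + 1 ≤ #(F^[m] S) := by
      intro m hm
      induction m with
      | zero => simpa using hS.card_pos
      | succ m ih =>
        have hlt := Finset.card_lt_card ((hF _).ssubset_of_ne (hfix m (by omega)).symm)
        rw [Function.iterate_succ_apply']
        have := ih (by omega)
        omega
    have := grow _ le_rfl
    have := Finset.card_le_univ (F^[Fintype.card ι] S)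
    omega

theorem Matrix.sum_mul_sum_le_sum_mul_apply {ι : Type*} [Fintype ι] {M N : Matrix ι ι ℝ}
    (hM : ∀ i j, 0 ≤ M i j) (hN : ∀ i j, 0 ≤ N i j) (A B : Finset ι) (i : ι) :
    ∑ k ∈ B, M i k * ∑ j ∈ A, N k j ≤ ∑ j ∈ A, (M * N) i j :=
  calc ∑ k ∈ B, M i k * ∑ j ∈ A, N k j
      ≤ ∑ k, M i k * ∑ j ∈ A, N k j :=
        sum_le_sum_of_subset_of_nonneg (subset_univ _) fun k _ _ =>
          mul_nonneg (hM _ _) (sum_nonneg fun j _ => hN _ _)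
    _ = ∑ j ∈ A, (M * N) i j := by
        simp only [mul_apply, mul_sum]
        exact sum_comm

section Graph

variable {K : ℕ} {E : Finset (Fin K × Fin K)}

def addSuccessors (E : Finset (Fin K × Fin K)) (S : Finset (Fin K)) : Finset (Fin K) :=
  S ∪ univ.filter fun μ => ∃ ν ∈ S, (ν, μ) ∈ E

theorem mem_addSuccessors {S : Finset (Fin K)} {μ : Fin K} :
    μ ∈ addSuccessors E S ↔ μ ∈ S ∨ ∃ ν ∈ S, (ν, μ) ∈ E := by
  simp [addSuccessors]

theorem exists_mem_iterate_addSuccessors {S : Finset (Fin K)} {ν μ : Fin K} (hν : ν ∈ S)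
    (h : Relation.ReflTransGen (EdgeRel E) ν μ) : ∃ n, μ ∈ (addSuccessors E)^[n] S := by
  induction h with
  | refl => exact ⟨0, hν⟩
  | tail _ hedge ih =>
    obtain ⟨n, hn⟩ := ih
    exact ⟨n + 1, by
      rw [Function.iterate_succ_apply', mem_addSuccessors]
      exact Or.inr ⟨_, hn, hedge⟩⟩

theorem MlInf_subset_Ml : MlInf E ⊆ Ml E := by
  classical
  exact filter_subset _ _

theorem Nin_subset_MlInf {μ : Fin K} (hμ : μ ∈ MlInf E) : Nin E μ ⊆ MlInf E := by
  intro ν hν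
  simp only [MlInf, mem_filter] at hμ ⊢
  have hedge : EdgeRel E ν μ := (mem_filter.mp hν).2
  refine ⟨?_, fun ρ hρ hpath => hμ.2 ρ hρ (hpath.tail hedge)⟩
  simp only [Ml, mem_filter, mem_univ, true_and]
  exact fun hnil => hμ.2 ν (by simpa [Mu] using hnil) (.single hedge)

theorem mem_iterate_addSuccessors_MlInf_of_mem_Mlc {μ : Fin K} (hμ : μ ∈ Mlc E) :
    μ ∈ (addSuccessors E)^[K - 1] (MlInf E) := by
  obtain ⟨ν, hν, hpath⟩ : ∃ ν ∈ MlInf E, Relation.ReflTransGen (EdgeRel E) ν μ := by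
    simp only [Mlc, mem_filter] at hμ
    rcases hμ.2 with h | ⟨ν, hν, hpath⟩
    exacts [⟨μ, h, .refl⟩, ⟨ν, hν, hpath.to_reflTransGen⟩]
  obtain ⟨n, hn⟩ := exists_mem_iterate_addSuccessors hν hpath
  simpa only [Fintype.card_fin] using Finset.iterate_subset_iterate_card_sub_one
    (F := addSuccessors E) (fun _ => subset_union_left) ⟨ν, hν⟩ n hn

theorem one_le_sum_MlInf {P : Matrix (Fin K) (Fin K) ℝ}
    (hP : ∀ i j, 0 ≤ P i j) (hProw : ∀ μ ∈ Ml E, ∑ ν ∈ Nin E μ, P μ ν = 1) :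
    ∀ μ ∈ MlInf E, 1 ≤ ∑ ν ∈ MlInf E, P μ ν := fun μ hμ =>
  (hProw μ (MlInf_subset_Ml hμ)).ge.trans
    (sum_le_sum_of_subset_of_nonneg (Nin_subset_MlInf hμ) fun ν _ _ => hP μ ν)

end Graph

section ProductMass

variable {K : ℕ} {P : ℕ → Matrix (Fin K) (Fin K) ℝ}

theorem Jmat_self (P : ℕ → Matrix (Fin K) (Fin K) ℝ) (t : ℕ) : Jmat P t (t + 1) = 1 := by
  simp [Jmat]

theorem Jmat_succ (P : ℕ → Matrix (Fin K) (Fin K) ℝ) {t s : ℕ} (h : s ≤ t + 1) :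
    Jmat P (t + 1) s = P (t + 1) * Jmat P t s := by
  rw [Jmat, Jmat, show t + 1 + 1 - s = t + 1 - s + 1 by omega, List.range'_1_concat,
    List.reverse_concat, List.map_cons, List.prod_cons, show s + (t + 1 - s) = t + 1 by omega]

variable (hP : ∀ t, 1 ≤ t → ∀ i j, 0 ≤ P t i j)
include hP

theorem Jmat_nonneg {s t : ℕ} (hst : s ≤ t) (i j : Fin K) : 0 ≤ Jmat P t (s + 1) i j := by
  induction t, hst using Nat.le_induction generalizing i j with
  | base => simp only [Jmat_self, one_apply]; split_ifs <;> norm_num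
  | succ t hst ih =>
    rw [Jmat_succ P (by omega), mul_apply]
    exact sum_nonneg fun k _ => mul_nonneg (hP _ (by omega) _ _) (ih k j)

theorem one_le_sum_Jmat_of_closed {A : Finset (Fin K)}
    (hA : ∀ t, 1 ≤ t → ∀ i ∈ A, 1 ≤ ∑ j ∈ A, P t i j) {s t : ℕ} (hst : s ≤ t) :
    ∀ i ∈ A, 1 ≤ ∑ j ∈ A, Jmat P t (s + 1) i j := by
  induction t, hst using Nat.le_induction with
  | base => intro i hi; simp [Jmat_self, one_apply, hi]
  | succ t hst ih =>
    intro i hi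
    rw [Jmat_succ P (by omega)]
    calc (1 : ℝ) ≤ ∑ k ∈ A, P (t + 1) i k := hA _ (by omega) i hi
      _ ≤ ∑ k ∈ A, P (t + 1) i k * ∑ j ∈ A, Jmat P t (s + 1) k j :=
          sum_le_sum fun k hk => le_mul_of_one_le_right (hP _ (by omega) _ _) (ih k hk)
      _ ≤ _ := sum_mul_sum_le_sum_mul_apply (hP _ (by omega)) (Jmat_nonneg hP hst) _ _ _

theorem pow_le_sum_Jmat_of_mem_iterate_addSuccessors {E : Finset (Fin K × Fin K)} {α : ℝ}
    (hα0 : 0 ≤ α) (hα1 : α ≤ 1) (hPα : ∀ t, 1 ≤ t → ∀ ν μ, (ν, μ) ∈ E → α ≤ P t μ ν)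
    {A : Finset (Fin K)} (hA : ∀ t, 1 ≤ t → ∀ i ∈ A, 1 ≤ ∑ j ∈ A, P t i j) (s m : ℕ) :
    ∀ μ ∈ (addSuccessors E)^[m] A, ∀ t, s + m ≤ t →
      α ^ m ≤ ∑ ν ∈ A, Jmat P t (s + 1) μ ν := by
  induction m with
  | zero => simpa using fun μ hμ t hst => one_le_sum_Jmat_of_closed hP hA hst μ hμ
  | succ m ih =>
    intro μ hμ t hst
    rw [Function.iterate_succ_apply', mem_addSuccessors] at hμ
    rcases hμ with hμ | ⟨ν, hν, hedge⟩
    · exact (pow_le_pow_of_le_one hα0 hα1 m.le_succ).trans (ih μ hμ t (by omega))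
    obtain ⟨t, rfl⟩ : ∃ t', t = t' + 1 := ⟨t - 1, by omega⟩
    rw [Jmat_succ P (by omega)]
    calc α ^ (m + 1) = α * α ^ m := pow_succ' α m
      _ ≤ P (t + 1) μ ν * ∑ j ∈ A, Jmat P t (s + 1) ν j :=
          mul_le_mul (hPα _ (by omega) ν μ hedge) (ih ν hν t (by omega))
            (pow_nonneg hα0 m) (hP _ (by omega) _ _)
      _ ≤ _ := by
          simpa using sum_mul_sum_le_sum_mul_apply (hP _ (by omega))
            (Jmat_nonneg hP (by omega : s ≤ t)) A {ν} μ

end ProductMass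

theorem stmt12_general
    {K : ℕ}
    (E : Finset (Fin K × Fin K))
    (α : ℝ) (hα0 : 0 < α) (hα1 : α < 1)
    (P : ℕ → Matrix (Fin K) (Fin K) ℝ)
    (hPnn : ∀ t, 1 ≤ t → ∀ μ ν : Fin K, 0 ≤ P t μ ν)
    (hProw : ∀ t, 1 ≤ t → ∀ μ ∈ Ml E, ∑ ν ∈ Nin E μ, P t μ ν = 1)
    (hPα : ∀ t, 1 ≤ t → ∀ ν μ : Fin K, (ν, μ) ∈ E → α ≤ P t μ ν) :
    ∀ μ ∈ Mlc E, ∀ t s : ℕ, s ≤ t → K - 1 ≤ t - s →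
      α ^ (K - 1) ≤ ∑ ν ∈ Ml E, Jmat P t (s + 1) μ ν := by
  intro μ hμ t s hst hKts
  calc α ^ (K - 1) ≤ ∑ ν ∈ MlInf E, Jmat P t (s + 1) μ ν :=
        pow_le_sum_Jmat_of_mem_iterate_addSuccessors hPnn hα0.le hα1.le hPα
          (fun t ht => one_le_sum_MlInf (hPnn t ht) (hProw t ht)) s (K - 1) μ
          (mem_iterate_addSuccessors_MlInf_of_mem_Mlc hμ) t (by omega)
    _ ≤ ∑ ν ∈ Ml E, Jmat P t (s + 1) μ ν :=
        sum_le_sum_of_subset_of_nonneg MlInf_subset_Ml fun ν _ _ => Jmat_nonneg hPnn hst μ ν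

/-- For every `μ ∈ M_l^c` and all `t ≥ s ≥ 0` with `t − s ≥ K − 1`,
`∑_{ν∈M_l} J_{t,s+1,μ,ν} ≥ α^(K−1)`. -/
theorem stmt12
    {K : ℕ} (hK : 1 ≤ K)
    (E : Finset (Fin K × Fin K))
    (α : ℝ) (hα0 : 0 < α) (hα1 : α < 1)
    (P : ℕ → Matrix (Fin K) (Fin K) ℝ)
    (hPzero : ∀ t, 1 ≤ t → ∀ μ ν : Fin K,
      ¬ ((μ ∈ Ml E ∧ ν ∈ Nin E μ) ∨ (μ = ν ∧ μ ∈ Mu E)) → P t μ ν = 0)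
    (hPnn : ∀ t, 1 ≤ t → ∀ μ ν : Fin K, 0 ≤ P t μ ν)
    (hPu : ∀ t, 1 ≤ t → ∀ μ ∈ Mu E, P t μ μ = 1)
    (hProw : ∀ t, 1 ≤ t → ∀ μ ∈ Ml E, ∑ ν ∈ Nin E μ, P t μ ν = 1)
    (hPα : ∀ t, 1 ≤ t → ∀ ν μ : Fin K, (ν, μ) ∈ E → α ≤ P t μ ν) :
    ∀ μ ∈ Mlc E, ∀ t s : ℕ, s ≤ t → K - 1 ≤ t - s →
      α ^ (K - 1) ≤ ∑ ν ∈ Ml E, Jmat P t (s + 1) μ ν :=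
  stmt12_general E α hα0 hα1 P hPnn hProw hPα
end

section
/- Fix an integer s ≥ K and a node u ∈ M_l ∖ M_l^∞. Then the total weight of length-K E-paths ending at u that avoid M_l^∞ is at most 1 − α^K; that is, the sum over all E-paths v_1 → v_2 → ⋯ → v_K → u of length K with v_1, …, v_K ∉ M_l^∞ of the products P_{s,u,v_K} · P_{s−1,v_K,v_{K−1}} ⋯ P_{s−K+1,v_2,v_1} is at most 1 − α^K. -/
open Matrix Finset Filter

/-!
Every `P_t` is row-stochastic, so the weights `P_{s,u,v_K} ⋯ P_{s-K+1,v_2,v_1}` of *all* sequences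
`v_1, …, v_K, u` sum to `1`. As `u ∉ M_l^∞`, some source `ν ∈ M_u` reaches `u` by a path of
length `L < K`. Idling at `ν`, where `P_{t,ν,ν} = 1`, for `K - L` steps and then following that
path gives a sequence of weight at least `α^K`; it is not an `E`-path since `ν` has no incoming
edge. Hence the `E`-paths carry total weight at most `1 - α^K`.
-/

namespace Relation.ReflTransGen

variable {α : Type*} {r : α → α → Prop} {a b : α}

theorem exists_injOn_walk (h : ReflTransGen r a b) :
    ∃ L, ∃ w : ℕ → α, w 0 = a ∧ w L = b ∧ (∀ i < L, r (w i) (w (i + 1))) ∧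
      Set.InjOn w (Set.Iic L) := by
  induction h with
  | refl => exact ⟨0, fun _ => a, rfl, rfl, by simp, by simp [Set.InjOn]⟩
  | @tail b c _ hbc ih =>
    obtain ⟨L, w, hw0, hwL, hstep, hinj⟩ := ih
    by_cases hc : ∃ i ≤ L, w i = c
    · -- `c` was visited already: cut the walk there
      obtain ⟨i, hiL, hwi⟩ := hc
      exact ⟨i, w, hw0, hwi, fun j hj => hstep j (by omega),
        hinj.mono (Set.Iic_subset_Iic.2 hiL)⟩
    · push Not at hc
      refine ⟨L + 1, fun i => if i ≤ L then w i else c, by simp [hw0], by simp, ?_, ?_⟩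
      · intro i hi
        rcases Nat.lt_or_ge i L with hi' | hi'
        · simpa [hi'.le, Nat.succ_le_of_lt hi'] using hstep i hi'
        · obtain rfl : i = L := by omega
          simpa [hwL] using hbc
      · intro i hi j hj hij
        simp only [Set.mem_Iic] at hi hj
        by_cases hiL : i ≤ L <;> by_cases hjL : j ≤ L <;>
          simp only [hiL, hjL, if_true, if_false] at hij
        · exact hinj hiL hjL hij
        · exact absurd hij (hc i hiL)
        · exact absurd hij.symm (hc j hjL)
        · omega

theorem exists_walk_length_lt_card [Fintype α] (h : ReflTransGen r a b) :
    ∃ L < Fintype.card α, ∃ w : ℕ → α, w 0 = a ∧ w L = b ∧ ∀ i < L, r (w i) (w (i + 1)) := by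
  obtain ⟨L, w, hw0, hwL, hstep, hinj⟩ := h.exists_injOn_walk
  have hcard : (Finset.range (L + 1)).card ≤ Fintype.card α :=
    Finset.card_le_card_of_injOn w (fun _ _ => Finset.mem_univ _) fun i hi j hj =>
      hinj (by simpa [Nat.lt_succ_iff] using hi) (by simpa [Nat.lt_succ_iff] using hj)
  exact ⟨L, by simpa using hcard, w, hw0, hwL, hstep⟩

theorem exists_padded_walk [Fintype α] {n : ℕ} (hn : Fintype.card α ≤ n)
    (h : ReflTransGen r a b) :
    ∃ v : Fin (n + 1) → α, v (Fin.last n) = b ∧ (∃ j : Fin n, v j.castSucc = a ∧ v j.succ = a) ∧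
      ∀ j : Fin n, (v j.castSucc = a ∧ v j.succ = a) ∨ r (v j.castSucc) (v j.succ) := by
  obtain ⟨L, hL, w, hw0, hwL, hstep⟩ := h.exists_walk_length_lt_card
  refine ⟨fun j => w (j - (n - L)), by simp [show n - (n - L) = L by omega, hwL],
    ⟨⟨0, by omega⟩, by simp [hw0, show 1 ≤ n - L by omega]⟩, fun j => ?_⟩
  by_cases hj : (j : ℕ) + 1 ≤ n - L
  · left
    simp [hw0, Nat.sub_eq_zero_of_le hj, Nat.sub_eq_zero_of_le (Nat.le_of_succ_le hj)]
  · right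
    simpa [show (j : ℕ) + 1 - (n - L) = j - (n - L) + 1 by omega] using
      hstep (j - (n - L)) (by omega)

end Relation.ReflTransGen

theorem sum_prod_eq_one_of_sum_row_eq_one {R ι : Type*} [CommSemiring R] [Fintype ι]
    [DecidableEq ι] (Q : ℕ → Matrix ι ι R) (hQ : ∀ j μ, ∑ ν, Q j μ ν = 1) (n : ℕ) (u : ι) :
    ∑ v ∈ univ.filter (fun v : Fin (n + 1) → ι => v (Fin.last n) = u),
      ∏ j : Fin n, Q j (v j.succ) (v j.castSucc) = 1 := by
  induction n generalizing Q with
  | zero =>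
    rw [sum_eq_single_of_mem (fun _ => u) (by simp)]
    · simp
    · intro v hv hne
      exact absurd (funext fun i => by simpa [Fin.fin_one_eq_zero i] using (mem_filter.1 hv).2) hne
  | succ n ih =>
    -- sum out the first vertex `v 0`, using that the row of `Q 0` at `v 1` sums to one
    rw [sum_filter, ← (Fin.consEquiv fun _ => ι).sum_comp, Fintype.sum_prod_type, sum_comm]
    simp only [Fin.consEquiv_apply, Fin.cons_last, Fin.prod_univ_succ, Fin.cons_succ,
      ← Fin.succ_castSucc, Fin.castSucc_zero, Fin.cons_zero, ← mul_ite_zero, ← sum_mul, hQ,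
      one_mul]
    rw [← sum_filter]
    exact ih (fun j => Q (j + 1)) fun j => hQ (j + 1)

theorem pow_le_prod_of_walk {R ι : Type*} [CommSemiring R] [PartialOrder R] [IsOrderedRing R]
    {r : ι → ι → Prop} {Q : ℕ → Matrix ι ι R} {α : R} {a : ι} (hα0 : 0 ≤ α) (hα1 : α ≤ 1)
    (hQa : ∀ j, Q j a a = 1) (hQr : ∀ j b c, r b c → α ≤ Q j c b) {n : ℕ}
    {v : Fin (n + 1) → ι}
    (hv : ∀ j : Fin n, (v j.castSucc = a ∧ v j.succ = a) ∨ r (v j.castSucc) (v j.succ)) :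
    α ^ n ≤ ∏ j : Fin n, Q j (v j.succ) (v j.castSucc) := by
  calc α ^ n = ∏ _j : Fin n, α := by simp
    _ ≤ _ := prod_le_prod (fun _ _ => hα0) fun j _ => ?_
  rcases hv j with ⟨hj, hj'⟩ | hr
  · rw [hj, hj', hQa]
    exact hα1
  · exact hQr _ _ _ hr

theorem sum_le_sum_sub_of_subset {ι M : Type*} [AddCommGroup M] [PartialOrder M]
    [IsOrderedAddMonoid M] {s t : Finset ι} {f : ι → M} {x : ι} (hst : s ⊆ t) (hx : x ∈ t)
    (hxs : x ∉ s) (hf : ∀ i ∈ t, 0 ≤ f i) : ∑ i ∈ s, f i ≤ ∑ i ∈ t, f i - f x := by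
  classical
  rw [le_sub_iff_add_le', ← sum_insert hxs]
  exact sum_le_sum_of_subset_of_nonneg (insert_subset hx hst) fun i hi _ => hf i hi

section Graph

variable {K : ℕ} {E : Finset (Fin K × Fin K)}

theorem mem_Nin {μ ν : Fin K} : ν ∈ Nin E μ ↔ (ν, μ) ∈ E := by simp [Nin]

theorem mem_Mu_iff_notMem_Ml {μ : Fin K} : μ ∈ Mu E ↔ μ ∉ Ml E := by simp [Mu, Ml]

theorem notMem_of_mem_Mu {ν : Fin K} (hν : ν ∈ Mu E) (μ : Fin K) : (μ, ν) ∉ E := fun h =>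
  eq_empty_iff_forall_notMem.1 (mem_filter.1 hν).2 μ (mem_Nin.2 h)

theorem exists_mem_Mu_transGen {u : Fin K} (hu : u ∈ Ml E) (hu' : u ∉ MlInf E) :
    ∃ ν ∈ Mu E, Relation.TransGen (EdgeRel E) ν u := by
  classical
  by_contra h
  push Not at h
  exact hu' (mem_filter.2 ⟨hu, h⟩)

theorem sum_row_eq_one {R : Type*} [Semiring R] {A : Matrix (Fin K) (Fin K) R}
    (hzero : ∀ μ ν : Fin K, ¬ ((μ ∈ Ml E ∧ ν ∈ Nin E μ) ∨ (μ = ν ∧ μ ∈ Mu E)) → A μ ν = 0)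
    (hu : ∀ μ ∈ Mu E, A μ μ = 1) (hrow : ∀ μ ∈ Ml E, ∑ ν ∈ Nin E μ, A μ ν = 1) (μ : Fin K) :
    ∑ ν, A μ ν = 1 := by
  by_cases hμ : μ ∈ Ml E
  · rw [← hrow μ hμ]
    refine (sum_subset (subset_univ _) fun ν _ hν => hzero μ ν ?_).symm
    simp [hν, mem_Mu_iff_notMem_Ml, hμ]
  · rw [sum_eq_single μ, hu μ (mem_Mu_iff_notMem_Ml.2 hμ)]
    · intro ν _ hν
      exact hzero μ ν (by simp [hμ, Ne.symm hν])
    · simp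

theorem pathsTo_subset {x : ℕ} {μ : Fin K} :
    pathsTo E x μ ⊆ univ.filter (fun v : Fin (x + 1) → Fin K => v (Fin.last x) = μ) :=
  fun v hv => by simp [(mem_filter.1 hv).2.1]

end Graph

theorem stmt15_general
    {K : ℕ}
    (E : Finset (Fin K × Fin K))
    (α : ℝ) (hα0 : 0 < α) (hα1 : α < 1)
    (P : ℕ → Matrix (Fin K) (Fin K) ℝ)
    (hPzero : ∀ t, 1 ≤ t → ∀ μ ν : Fin K,
      ¬ ((μ ∈ Ml E ∧ ν ∈ Nin E μ) ∨ (μ = ν ∧ μ ∈ Mu E)) → P t μ ν = 0)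
    (hPnn : ∀ t, 1 ≤ t → ∀ μ ν : Fin K, 0 ≤ P t μ ν)
    (hPu : ∀ t, 1 ≤ t → ∀ μ ∈ Mu E, P t μ μ = 1)
    (hProw : ∀ t, 1 ≤ t → ∀ μ ∈ Ml E, ∑ ν ∈ Nin E μ, P t μ ν = 1)
    (hPα : ∀ t, 1 ≤ t → ∀ ν μ : Fin K, (ν, μ) ∈ E → α ≤ P t μ ν)
    (s : ℕ) (u : Fin K) (hu : u ∈ Ml E) (hu' : u ∉ MlInf E) :
    ∑ v ∈ (pathsTo E K u).filter (fun v => ∀ j : Fin K, v j.castSucc ∉ MlInf E),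
        ∏ j : Fin K, P (s - K + 1 + (j : ℕ)) (v j.succ) (v j.castSucc)
      ≤ 1 - α ^ K := by
  obtain ⟨ν, hν, hνu⟩ := exists_mem_Mu_transGen hu hu'
  obtain ⟨v, hvu, ⟨j₀, hj₀⟩, hstep⟩ :=
    hνu.to_reflTransGen.exists_padded_walk (n := K) (Fintype.card_fin K).le
  have hv : v ∉ pathsTo E K u := fun h => notMem_of_mem_Mu hν ν <| by
    simpa [hj₀] using (mem_filter.1 h).2.2 j₀
  have hweight := pow_le_prod_of_walk (Q := fun j => P (s - K + 1 + j)) hα0.le hα1.le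
    (fun _ => hPu _ (by omega) ν hν) (fun _ => hPα _ (by omega)) hstep
  have htotal := sum_prod_eq_one_of_sum_row_eq_one (fun j => P (s - K + 1 + j))
    (fun _ => sum_row_eq_one (hPzero _ (by omega)) (hPu _ (by omega)) (hProw _ (by omega))) K u
  refine le_trans (sum_le_sum_sub_of_subset (fun w hw => pathsTo_subset (mem_filter.1 hw).1)
    (by simp [hvu]) (fun h => hv (mem_filter.1 h).1) fun _ _ =>
      prod_nonneg fun j _ => hPnn (s - K + 1 + j) (by omega) _ _) ?_
  rw [htotal]
  exact sub_le_sub_left hweight 1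

/-- For `s ≥ K` and `u ∈ M_l ∖ M_l^∞`, the total weight of length-`K`
`E`-paths ending at `u` that avoid `M_l^∞`, i.e. the sum over all `E`-paths
`v_1 → ⋯ → v_K → u` with `v_1, …, v_K ∉ M_l^∞` of
`P_{s,u,v_K} · P_{s−1,v_K,v_{K−1}} ⋯ P_{s−K+1,v_2,v_1}`, is at most `1 − α^K`. -/
theorem stmt15
    {K : ℕ} (hK : 1 ≤ K)
    (E : Finset (Fin K × Fin K))
    (α : ℝ) (hα0 : 0 < α) (hα1 : α < 1)
    (P : ℕ → Matrix (Fin K) (Fin K) ℝ)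
    (hPzero : ∀ t, 1 ≤ t → ∀ μ ν : Fin K,
      ¬ ((μ ∈ Ml E ∧ ν ∈ Nin E μ) ∨ (μ = ν ∧ μ ∈ Mu E)) → P t μ ν = 0)
    (hPnn : ∀ t, 1 ≤ t → ∀ μ ν : Fin K, 0 ≤ P t μ ν)
    (hPu : ∀ t, 1 ≤ t → ∀ μ ∈ Mu E, P t μ μ = 1)
    (hProw : ∀ t, 1 ≤ t → ∀ μ ∈ Ml E, ∑ ν ∈ Nin E μ, P t μ ν = 1)
    (hPα : ∀ t, 1 ≤ t → ∀ ν μ : Fin K, (ν, μ) ∈ E → α ≤ P t μ ν)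
    (s : ℕ) (hs : K ≤ s) (u : Fin K) (hu : u ∈ Ml E) (hu' : u ∉ MlInf E) :
    ∑ v ∈ (pathsTo E K u).filter (fun v => ∀ j : Fin K, v j.castSucc ∉ MlInf E),
        ∏ j : Fin K, P (s - K + 1 + (j : ℕ)) (v j.succ) (v j.castSucc)
      ≤ 1 - α ^ K :=
  stmt15_general E α hα0 hα1 P hPzero hPnn hPu hProw hPα s u hu hu'
end
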